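/- arXiv:2505.08887 — 4 statements merged into one kernel-verified Lean document; each statement's English description precedes it below -/
import Mathlib

section
/- (Cauchy–Davenport) Let p be a prime and A, B nonempty subsets of Z/pZ. Then |A + B| ≥ min(|A| + |B| - 1, p). -/
open scoped Pointwise

theorem stmt2 (p : ℕ) (hp : p.Prime) (A B : Finset (ZMod p))
    (hA : A.Nonempty) (hB : B.Nonempty) :
    min (A.card + B.card - 1) p ≤ (A + B).card := by
  simpa [min_comm] using ZMod.cauchy_davenport hp hA hB
end

section
/- Let K_{m,n} = ⟨a, b : a^m = 1, b^{2n} = a^g, b a b⁻¹ = a⁻¹⟩ be non-abelian with m, n ≥ 1 (where g = 0 if m is odd, and g ∈ {0, m/2} if m is even). If k is an odd positive divisor of 2mn, then K_{m,n} has a normal subgroup of order k. -/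
/-- The relations of the metacyclic presentation
`K_{m,n} = ⟨a, b : a^m = 1, b^(2n) = a^g, b a b⁻¹ = a⁻¹⟩`, with generator `0`
playing the role of `a` and generator `1` playing the role of `b`. -/
def Krels (m n g : ℕ) : Set (FreeGroup (Fin 2)) :=
  {FreeGroup.of 0 ^ m,
   FreeGroup.of 1 ^ (2 * n) * (FreeGroup.of 0 ^ g)⁻¹,
   FreeGroup.of 1 * FreeGroup.of 0 * (FreeGroup.of 1)⁻¹ * FreeGroup.of 0}

/-!
Since `k` is odd, `k ∣ m n`, so `k = k₁ k₂` with `m = k₁ M` and `n = k₂ t`; take `u = a ^ M` and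
`c = b ^ (4 t)`. As `b` inverts `a`, `b²` commutes with `a`, so `c` is central and `⟨u⟩ ⊔ ⟨c⟩` is
normal. We have `u ^ k₁ = 1` and `c ^ k₂ = b ^ (4 n) = a ^ (2 g) = 1`, so it suffices that `u`, `c`
have orders at least `k₁`, `k₂` and `⟨u⟩ ∩ ⟨c⟩ = 1`. Both come from two homomorphisms:
`K → D_{gcd(m, g)}`, `a ↦ r, b ↦ s`, kills `c` and sends `u` to an element of order divisible by
`k₁` (because `m ∣ 2 gcd(m, g)` and `k₁` is odd), while `K → ℤ/2n`, `a ↦ 0, b ↦ 1`, sends `c` to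
an element of order divisible by `k₂`.
-/

open Subgroup

theorem Nat.dvd_two_mul_gcd_of_dvd_two_mul {m g : ℕ} (h : m ∣ 2 * g) : m ∣ 2 * m.gcd g := by
  rw [← Nat.gcd_mul_left]
  exact Nat.dvd_gcd (dvd_mul_left m 2) h

section GroupLemmas

variable {G : Type*} [Group G]

theorem commute_sq_of_mul_mul_inv_eq_inv {a b : G} (h : b * a * b⁻¹ = a⁻¹) :
    Commute a (b ^ 2) := by
  have h' : b * a⁻¹ * b⁻¹ = a := by simpa [mul_assoc] using congrArg (·⁻¹) h
  have hconj : b ^ 2 * a * (b ^ 2)⁻¹ = a :=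
    calc b ^ 2 * a * (b ^ 2)⁻¹ = b * (b * a * b⁻¹) * b⁻¹ := by rw [sq]; group
      _ = a := by rw [h, h']
  exact (mul_inv_eq_iff_eq_mul.mp hconj).symm

theorem orderOf_eq_of_pow_eq_one_of_dvd_orderOf_map {H : Type*} [Group H] (f : G →* H) {x : G}
    {p : ℕ} (hx : x ^ p = 1) (hp : p ∣ orderOf (f x)) : orderOf x = p :=
  Nat.dvd_antisymm (orderOf_dvd_of_pow_eq_one hx) (hp.trans (orderOf_map_dvd f x))

theorem Odd.dvd_orderOf_pow {x : G} {k M : ℕ} (hk : Odd k) (hM : 0 < M)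
    (h : k * M ∣ 2 * orderOf x) : k ∣ orderOf (x ^ M) := by
  have hx : orderOf x ∣ M * orderOf (x ^ M) :=
    orderOf_dvd_of_pow_eq_one (by rw [pow_mul, pow_orderOf_eq_one])
  have h2 : k * M ∣ 2 * orderOf (x ^ M) * M := by
    refine h.trans ?_
    rw [mul_assoc, mul_comm (orderOf _)]
    exact mul_dvd_mul_left 2 hx
  exact hk.coprime_two_right.dvd_of_dvd_mul_left (Nat.dvd_of_mul_dvd_mul_right hM h2)

theorem disjoint_zpowers_of_map_eq_one {H : Type*} [Group H] (f : G →* H) {u c : G}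
    (hc : f c = 1) (hu : orderOf u ∣ orderOf (f u)) : Disjoint (zpowers u) (zpowers c) := by
  rw [disjoint_iff_inf_le]
  rintro z ⟨hzu, hzc⟩
  obtain ⟨i, rfl⟩ := mem_zpowers_iff.mp hzu
  obtain ⟨j, hj⟩ := mem_zpowers_iff.mp hzc
  have hfu : f u ^ i = 1 := by rw [← map_zpow, ← hj, map_zpow, hc, one_zpow]
  exact orderOf_dvd_iff_zpow_eq_one.mp
    ((Int.natCast_dvd_natCast.mpr hu).trans (orderOf_dvd_iff_zpow_eq_one.mpr hfu))

theorem card_zpowers_sup_zpowers {u c : G} (huc : Commute u c)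
    (h : Disjoint (zpowers u) (zpowers c)) :
    Nat.card ↥(zpowers u ⊔ zpowers c) = orderOf u * orderOf c := by
  have hcomm : ∀ (x : zpowers u) (y : zpowers c),
      Commute ((zpowers u).subtype x) ((zpowers c).subtype y) := by
    rintro ⟨-, i, rfl⟩ ⟨-, j, rfl⟩
    exact huc.zpow_zpow i j
  have hinj : Function.Injective (MonoidHom.noncommCoprod _ _ hcomm) :=
    (MonoidHom.noncommCoprod_injective _ _ hcomm).mpr
      ⟨subtype_injective _, subtype_injective _, by simpa using h⟩
  rw [← range_subtype (zpowers u), ← range_subtype (zpowers c),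
    ← MonoidHom.noncommCoprod_range _ _ hcomm,
    ← Nat.card_congr (MonoidHom.ofInjective hinj).toEquiv, Nat.card_prod,
    Nat.card_zpowers, Nat.card_zpowers]

theorem mem_normalizer_zpowers_sup_zpowers {x u c : G}
    (hu : zpowers (x * u * x⁻¹) = zpowers u) (hc : zpowers (x * c * x⁻¹) = zpowers c) :
    x ∈ normalizer ((zpowers u ⊔ zpowers c : Subgroup G) : Set G) := by
  rw [mem_normalizer_iff_map_conj_eq, Subgroup.map_sup, MonoidHom.map_zpowers,
    MonoidHom.map_zpowers]
  simpa using congrArg₂ (· ⊔ ·) hu hc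

theorem normal_zpowers_sup_zpowers {a b u c : G} (hG : closure {a, b} = ⊤)
    (hau : Commute a u) (hac : Commute a c) (hbu : b * u * b⁻¹ = u⁻¹) (hbc : Commute b c) :
    (zpowers u ⊔ zpowers c).Normal := by
  have hfix : ∀ {x y : G}, Commute x y → zpowers (x * y * x⁻¹) = zpowers y := fun h => by
    rw [h.eq, mul_inv_cancel_right]
  rw [← normalizer_eq_top_iff, eq_top_iff, ← hG, closure_le]
  rintro x (rfl | rfl)
  · exact mem_normalizer_zpowers_sup_zpowers (hfix hau) (hfix hac)
  · exact mem_normalizer_zpowers_sup_zpowers (by rw [hbu, zpowers_inv]) (hfix hbc)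

end GroupLemmas

namespace Krels

variable {m n g : ℕ}

def a : PresentedGroup (Krels m n g) := PresentedGroup.of 0

def b : PresentedGroup (Krels m n g) := PresentedGroup.of 1

theorem a_pow : (a : PresentedGroup (Krels m n g)) ^ m = 1 := by
  have h := PresentedGroup.one_of_mem (rels := Krels m n g) (x := FreeGroup.of 0 ^ m)
    (by simp [Krels])
  rwa [map_pow] at h

theorem b_pow : (b : PresentedGroup (Krels m n g)) ^ (2 * n) = a ^ g := by
  have h := PresentedGroup.one_of_mem (rels := Krels m n g)
    (x := FreeGroup.of 1 ^ (2 * n) * (FreeGroup.of 0 ^ g)⁻¹) (by simp [Krels])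
  rw [map_mul, map_inv, map_pow, map_pow] at h
  exact mul_inv_eq_one.mp h

theorem b_mul_a_mul_b_inv : (b : PresentedGroup (Krels m n g)) * a * b⁻¹ = a⁻¹ := by
  have h := PresentedGroup.one_of_mem (rels := Krels m n g)
    (x := FreeGroup.of 1 * FreeGroup.of 0 * (FreeGroup.of 1)⁻¹ * FreeGroup.of 0) (by simp [Krels])
  rw [map_mul, map_mul, map_mul, map_inv] at h
  exact mul_eq_one_iff_eq_inv.mp h

theorem closure_a_b : closure {a, b} = (⊤ : Subgroup (PresentedGroup (Krels m n g))) := by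
  rw [← PresentedGroup.closure_range_of]
  congr 1
  ext x
  simp [Fin.exists_fin_two, a, b, eq_comm]

theorem b_pow_four_mul (hg : m ∣ 2 * g) : (b : PresentedGroup (Krels m n g)) ^ (4 * n) = 1 := by
  obtain ⟨j, hj⟩ := hg
  rw [show 4 * n = 2 * n * 2 by ring, pow_mul, b_pow, ← pow_mul, mul_comm, hj, pow_mul, a_pow,
    one_pow]

theorem commute_a_b_sq : Commute (a : PresentedGroup (Krels m n g)) (b ^ 2) :=
  commute_sq_of_mul_mul_inv_eq_inv b_mul_a_mul_b_inv

section Lift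

variable {Q : Type*} [Group Q] (x y : Q) (hx : x ^ m = 1) (hy : y ^ (2 * n) = x ^ g)
  (hyx : y * x * y⁻¹ = x⁻¹)

def lift : PresentedGroup (Krels m n g) →* Q :=
  PresentedGroup.toGroup (f := ![x, y]) <| by
    rintro r (rfl | rfl | rfl) <;> simp [hx, hy, hyx]

theorem lift_a : lift x y hx hy hyx a = x := PresentedGroup.toGroup.of _

theorem lift_b : lift x y hx hy hyx b = y := PresentedGroup.toGroup.of _

end Lift

open DihedralGroup in
def toDihedralGroup : PresentedGroup (Krels m n g) →* DihedralGroup (m.gcd g) :=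
  lift (r 1) (sr 0)
    (by rw [r_one_pow, (ZMod.natCast_eq_zero_iff _ _).mpr (m.gcd_dvd_left g), r_zero])
    (by rw [pow_mul, sq, sr_mul_self, one_pow, r_one_pow,
      (ZMod.natCast_eq_zero_iff _ _).mpr (m.gcd_dvd_right g), r_zero])
    (by simp [sr_mul_r, sr_mul_sr, inv_r])

def toZMod : PresentedGroup (Krels m n g) →* Multiplicative (ZMod (2 * n)) :=
  lift 1 (.ofAdd 1) (one_pow m)
    (by rw [one_pow, ← ofAdd_nsmul, nsmul_one, ZMod.natCast_self, ofAdd_zero]) (by simp)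

theorem toDihedralGroup_a :
    toDihedralGroup (a : PresentedGroup (Krels m n g)) = DihedralGroup.r 1 := lift_a ..

theorem toDihedralGroup_b :
    toDihedralGroup (b : PresentedGroup (Krels m n g)) = DihedralGroup.sr 0 := lift_b ..

theorem toZMod_b : toZMod (b : PresentedGroup (Krels m n g)) = .ofAdd 1 := lift_b ..

theorem toDihedralGroup_b_sq : toDihedralGroup (b ^ 2 : PresentedGroup (Krels m n g)) = 1 := by
  rw [map_pow, toDihedralGroup_b, sq, DihedralGroup.sr_mul_self]

theorem normal_zpowers_a_pow_sup_zpowers_b_sq_pow (p q : ℕ) :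
    (zpowers (a ^ p) ⊔ zpowers ((b ^ 2) ^ q) : Subgroup (PresentedGroup (Krels m n g))).Normal :=
  normal_zpowers_sup_zpowers closure_a_b ((Commute.refl a).pow_right p)
    (commute_a_b_sq.pow_right q) (by rw [← conj_pow, b_mul_a_mul_b_inv, inv_pow])
    ((Commute.self_pow b 2).pow_right q)

theorem dvd_orderOf_toDihedralGroup_a_pow {k M : ℕ} (hk : Odd k) (hM : 0 < M)
    (hg : k * M ∣ 2 * g) :
    k ∣ orderOf (toDihedralGroup (a ^ M : PresentedGroup (Krels (k * M) n g))) := by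
  rw [map_pow, toDihedralGroup_a]
  refine hk.dvd_orderOf_pow hM ?_
  rw [DihedralGroup.orderOf_r_one]
  exact Nat.dvd_two_mul_gcd_of_dvd_two_mul hg

theorem orderOf_a_pow {k M : ℕ} (hk : Odd k) (hM : 0 < M) (hg : k * M ∣ 2 * g) :
    orderOf (a ^ M : PresentedGroup (Krels (k * M) n g)) = k :=
  orderOf_eq_of_pow_eq_one_of_dvd_orderOf_map _ (by rw [← pow_mul, mul_comm, a_pow])
    (dvd_orderOf_toDihedralGroup_a_pow hk hM hg)

theorem disjoint_zpowers_a_pow_zpowers_b_sq_pow {k M : ℕ} (hk : Odd k) (hM : 0 < M)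
    (hg : k * M ∣ 2 * g) (q : ℕ) :
    Disjoint (zpowers (a ^ M))
      (zpowers ((b ^ 2) ^ q) : Subgroup (PresentedGroup (Krels (k * M) n g))) := by
  refine disjoint_zpowers_of_map_eq_one toDihedralGroup
    (by rw [map_pow, toDihedralGroup_b_sq, one_pow]) ?_
  rw [orderOf_a_pow hk hM hg]
  exact dvd_orderOf_toDihedralGroup_a_pow hk hM hg

theorem orderOf_b_sq_pow {k t : ℕ} (hk : Odd k) (ht : 0 < t) (hg : m ∣ 2 * g) :
    orderOf ((b ^ 2) ^ (2 * t) : PresentedGroup (Krels m (k * t) g)) = k := by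
  refine orderOf_eq_of_pow_eq_one_of_dvd_orderOf_map toZMod ?_ ?_
  · rw [← pow_mul, ← pow_mul, show 2 * (2 * t * k) = 4 * (k * t) by ring, b_pow_four_mul hg]
  · rw [map_pow, map_pow, toZMod_b, ← pow_mul]
    refine hk.dvd_orderOf_pow (by positivity) (dvd_of_eq ?_)
    rw [orderOf_ofAdd_eq_addOrderOf, ZMod.addOrderOf_one]
    ring

end Krels

theorem stmt10_general (m n g k : ℕ) (hm : 1 ≤ m) (hn : 1 ≤ n)
    (hg : g = 0 ∨ 2 * g = m)
    (hk : k ∣ 2 * m * n) (hkodd : Odd k) :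
    ∃ H : Subgroup (PresentedGroup (Krels m n g)), H.Normal ∧ Nat.card H = k := by
  have hkmn : k ∣ m * n := hkodd.coprime_two_right.dvd_of_dvd_mul_left (by rwa [mul_assoc] at hk)
  obtain ⟨k₁, k₂, ⟨M, rfl⟩, ⟨t, rfl⟩, rfl⟩ := exists_dvd_and_dvd_of_dvd_mul hkmn
  obtain ⟨hk₁, hk₂⟩ := Nat.odd_mul.mp hkodd
  have hM : 0 < M := Nat.pos_of_mul_pos_left hm
  have ht : 0 < t := Nat.pos_of_mul_pos_left hn
  have h2g : k₁ * M ∣ 2 * g := by rcases hg with h | h <;> simp [h]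
  have hu := Krels.orderOf_a_pow (n := k₂ * t) hk₁ hM h2g
  have hc := Krels.orderOf_b_sq_pow hk₂ ht h2g
  refine ⟨_, Krels.normal_zpowers_a_pow_sup_zpowers_b_sq_pow M (2 * t), ?_⟩
  rw [card_zpowers_sup_zpowers (Krels.commute_a_b_sq.pow_pow M _)
    (Krels.disjoint_zpowers_a_pow_zpowers_b_sq_pow hk₁ hM h2g _), hu, hc]

theorem stmt10 (m n g k : ℕ) (hm : 1 ≤ m) (hn : 1 ≤ n)
    (hgodd : Odd m → g = 0) (hg : g = 0 ∨ 2 * g = m)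
    (hna : ¬ ∀ x y : PresentedGroup (Krels m n g), x * y = y * x)
    (hkpos : 0 < k) (hk : k ∣ 2 * m * n) (hkodd : Odd k) :
    ∃ H : Subgroup (PresentedGroup (Krels m n g)), H.Normal ∧ Nat.card H = k :=
  stmt10_general m n g k hm hn hg hk hkodd
end

section
/- Let K_{m,n} = ⟨a, b : a^m = 1, b^{2n} = a^g, b a b⁻¹ = a⁻¹⟩ be a non-abelian metacyclic group of order 2mn. A positive divisor k of 2mn is the order of some normal subgroup of K_{m,n} if and only if m divides k or v₂(k) < v₂(2mn), where v₂ denotes the 2-adic valuation. -/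
/-!
The map `a ↦ 0, b ↦ 1` is a homomorphism `K →* ZMod (2n)` whose kernel is `⟨a⟩`, and `a` has
order exactly `m` because the relations hold in a quotient of `D_m × C_{4n}`; hence `|K| = 2mn`.
Conjugation acts on `⟨a⟩` through the sign character `a ↦ 1, b ↦ -1`.

A normal subgroup of `K` inside the kernel of the sign has order dividing `mn`. One containing an
element `x` of sign `-1` contains the commutator `a x a⁻¹ x⁻¹ = a²`, and `⟨a²⟩` lies in its even
part, of index `2`; so its order is a multiple of `m`.

Conversely, if `m ∣ k` the preimage of the subgroup of order `k / m` of `ZMod (2n)` works. If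
`v₂(k) < v₂(2mn)`, write `k = d e` with `d ∣ m`, `e ∣ n` and `e` or `m / d` odd; then
`⟨a^(m/d)⟩ ⊔ ⟨b^(2n/e) a^g⟩` is normal of order `d e`, since `b^(2n/e) a^g` is central and its
`e`-th power `a^(g(e+1))` lies in `⟨a^(m/d)⟩`.
-/

open Subgroup

theorem Subgroup.normal_of_le_center {G : Type*} [Group G] {H : Subgroup G} (h : H ≤ center G) :
    H.Normal :=
  ⟨fun x hx y => by rwa [mem_center_iff.mp (h hx) y, mul_inv_cancel_right]⟩

theorem Subgroup.card_eq_card_inf_ker_mul_card_map {G G' : Type*} [Group G] [Group G']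
    (f : G →* G') (H : Subgroup G) :
    Nat.card H = Nat.card (H ⊓ f.ker : Subgroup G) * Nat.card (H.map f) := by
  rw [← Nat.card_congr (subgroupOfEquivOfLe inf_le_left).toEquiv, inf_subgroupOf_left,
    ← MonoidHom.ker_domRestrict, ← MonoidHom.domRestrict_range, ← index_ker, card_mul_index]

theorem MonoidHom.card_eq_card_ker_mul_card_of_surjective {G G' : Type*} [Group G] [Group G']
    {f : G →* G'} (hf : Function.Surjective f) : Nat.card G = Nat.card f.ker * Nat.card G' := by
  rw [← card_top (G := G), card_eq_card_inf_ker_mul_card_map f, top_inf_eq,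
    ← MonoidHom.range_eq_map, MonoidHom.range_eq_top.mpr hf, card_top]

theorem Subgroup.card_sup_zpowers_of_le_ker {G G' : Type*} [Group G] [Group G'] (f : G →* G')
    {X : Subgroup G} [X.Normal] (hX : X ≤ f.ker) {c : G} (hc : c ^ orderOf (f c) ∈ X) :
    Nat.card (X ⊔ zpowers c : Subgroup G) = Nat.card X * orderOf (f c) := by
  have hinf : (X ⊔ zpowers c) ⊓ f.ker = X := by
    refine le_antisymm (fun x ⟨hxN, hxker⟩ => ?_) (le_inf le_sup_left hX)
    obtain ⟨u, hu, _, ⟨j, rfl⟩, rfl⟩ := mem_sup_of_normal_left.mp hxN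
    have hj : f c ^ j = 1 := by simpa [MonoidHom.mem_ker.mp (hX hu)] using hxker
    obtain ⟨t, rfl⟩ := orderOf_dvd_iff_zpow_eq_one.mpr hj
    refine mul_mem hu ?_
    show c ^ ((orderOf (f c) : ℤ) * t) ∈ X
    rw [zpow_mul, zpow_natCast]
    exact zpow_mem hc t
  rw [card_eq_card_inf_ker_mul_card_map f, hinf, map_sup, (map_eq_bot_iff X).mpr hX, bot_sup_eq,
    MonoidHom.map_zpowers, Nat.card_zpowers]

theorem padicValNat_two_lt_of_dvd {k M : ℕ} (hM : M ≠ 0) (hk : k ∣ M) :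
    padicValNat 2 k < padicValNat 2 (2 * M) := by
  obtain ⟨s, rfl⟩ := hk
  have ⟨hk0, hs0⟩ := mul_ne_zero_iff.mp hM
  rw [padicValNat.mul two_ne_zero hM, padicValNat.mul hk0 hs0, padicValNat.self one_lt_two]
  omega

theorem exists_dvd_dvd_of_padicValNat_two_lt {m n k : ℕ} (hm : m ≠ 0) (hn : n ≠ 0)
    (hk : k ∣ 2 * m * n) (hv : padicValNat 2 k < padicValNat 2 (2 * m * n)) :
    ∃ d e, d ∣ m ∧ e ∣ n ∧ d * e = k ∧ (Odd e ∨ Odd (m / d)) := by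
  have hd : 0 < m.gcd k := Nat.gcd_pos_of_pos_left k (Nat.pos_of_ne_zero hm)
  have hcop := Nat.coprime_div_gcd_div_gcd hd
  obtain ⟨e, hke⟩ := Nat.gcd_dvd_right m k
  obtain ⟨m', hm'⟩ := Nat.gcd_dvd_left m k
  generalize m.gcd k = d at *
  subst hke hm'
  rw [Nat.mul_div_cancel_left _ hd, Nat.mul_div_cancel_left _ hd] at hcop
  obtain ⟨t, ht⟩ : e ∣ 2 * n := by
    refine hcop.symm.dvd_of_dvd_mul_left (Nat.dvd_of_mul_dvd_mul_left hd ?_)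
    rw [show d * (m' * (2 * n)) = 2 * (d * m') * n by ring]
    exact hk
  have hen : 2 ∣ t → e ∣ n := fun ⟨s, hs⟩ => ⟨s, by rw [hs, mul_left_comm] at ht; omega⟩
  rcases Nat.even_or_odd e with he | he
  · have hm'odd : Odd m' := Nat.not_even_iff_odd.mp fun hm'even =>
      Nat.not_coprime_of_dvd_of_dvd one_lt_two hm'even.two_dvd he.two_dvd hcop
    refine ⟨d, e, dvd_mul_right d m', hen ?_, rfl,
      .inr (by rwa [Nat.mul_div_cancel_left _ hd])⟩
    have het : e * t ≠ 0 := by omega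
    have ⟨hd0, hm'0⟩ := mul_ne_zero_iff.mp hm
    have ⟨he0, ht0⟩ := mul_ne_zero_iff.mp het
    rw [show 2 * (d * m') * n = d * m' * (e * t) by rw [← ht]; ring, padicValNat.mul hm het,
      padicValNat.mul hd0 hm'0, padicValNat.mul hd0 he0, padicValNat.mul he0 ht0,
      padicValNat.eq_zero_of_not_dvd hm'odd.not_two_dvd_nat] at hv
    exact dvd_of_one_le_padicValNat (by omega)
  · refine ⟨d, e, dvd_mul_right d m', hen ?_, rfl, .inl he⟩
    exact (Nat.coprime_two_left.mpr he).dvd_of_dvd_mul_left ⟨n, ht ▸ by ring⟩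

abbrev KGroup (m n g : ℕ) : Type := PresentedGroup (Krels m n g)

namespace KGroup

variable {m n g : ℕ}

def a : KGroup m n g := PresentedGroup.of 0

def b : KGroup m n g := PresentedGroup.of 1

section Lift

variable {H : Type*} [Group H] (α β : H) (h₁ : α ^ m = 1) (h₂ : β ^ (2 * n) = α ^ g)
  (h₃ : β * α * β⁻¹ = α⁻¹)

def lift : KGroup m n g →* H :=
  PresentedGroup.toGroup (f := ![α, β]) <| by
    rintro r (rfl | rfl | rfl) <;> simp [h₁, h₂, h₃]

theorem lift_a : lift α β h₁ h₂ h₃ a = α := PresentedGroup.toGroup.of _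

theorem lift_b : lift α β h₁ h₂ h₃ b = β := PresentedGroup.toGroup.of _

end Lift

theorem a_pow_m : (a : KGroup m n g) ^ m = 1 :=
  PresentedGroup.one_of_mem (Set.mem_insert _ _)

theorem b_pow_two_mul : (b : KGroup m n g) ^ (2 * n) = a ^ g :=
  mul_inv_eq_one.mp <| PresentedGroup.one_of_mem (Set.mem_insert_of_mem _ (Set.mem_insert _ _))

theorem b_mul_a_mul_b_inv : (b : KGroup m n g) * a * b⁻¹ = a⁻¹ :=
  mul_eq_one_iff_eq_inv.mp <| PresentedGroup.one_of_mem
    (Set.mem_insert_of_mem _ (Set.mem_insert_of_mem _ rfl))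

theorem mem_of_a_mem_of_b_mem {H : Subgroup (KGroup m n g)} (ha : a ∈ H) (hb : b ∈ H)
    (x : KGroup m n g) : x ∈ H :=
  PresentedGroup.generated_by _ H (Fin.forall_fin_two.mpr ⟨ha, hb⟩) x

def sign : KGroup m n g →* ℤˣ :=
  lift 1 (-1) (one_pow m) (by rw [pow_mul, neg_one_sq, one_pow, one_pow]) (by simp)

def bDeg : KGroup m n g →* Multiplicative (ZMod (2 * n)) :=
  lift 1 (.ofAdd 1) (one_pow m) (by rw [one_pow, ← ofAdd_nsmul, nsmul_one]; simp) (by simp)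

@[simp] theorem sign_a : sign (a : KGroup m n g) = 1 := lift_a ..
@[simp] theorem sign_b : sign (b : KGroup m n g) = -1 := lift_b ..
@[simp] theorem bDeg_a : bDeg (a : KGroup m n g) = 1 := lift_a ..
@[simp] theorem bDeg_b : bDeg (b : KGroup m n g) = .ofAdd 1 := lift_b ..

theorem conj_a (x : KGroup m n g) : x * a * x⁻¹ = a ^ (sign x : ℤ) := by
  refine Subgroup.closure_induction (p := fun x _ => x * a * x⁻¹ = a ^ (sign x : ℤ))
    ?_ ?_ ?_ ?_ (PresentedGroup.closure_range_of (Krels m n g) ▸ mem_top x)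
  · rintro _ ⟨i, rfl⟩
    fin_cases i
    · show a * a * a⁻¹ = a ^ ((sign a : ℤˣ) : ℤ)
      simp
    · show b * a * b⁻¹ = a ^ ((sign b : ℤˣ) : ℤ)
      simp [b_mul_a_mul_b_inv]
  · simp
  · intro x y _ _ hx hy
    rw [map_mul, Units.val_mul, zpow_mul, ← hx, conj_zpow, ← hy]
    group
  · intro x _ hx
    calc x⁻¹ * a * x⁻¹⁻¹ = x⁻¹ * (a ^ (sign x : ℤ)) ^ (sign x : ℤ) * x := by
          rw [← zpow_mul, ← Units.val_mul, Int.units_mul_self, Units.val_one, zpow_one, inv_inv]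
      _ = a ^ (sign x⁻¹ : ℤ) := by
          rw [← hx, conj_zpow, map_inv, Int.units_inv_eq_self]
          group

section Model

open DihedralGroup

/- A group in which the relations of `K` hold and the image of `a` has order exactly `m`: the
quotient of `D_m × C_{4n}` by the central involution `(r g, 2n)`, with `a ↦ (r 1, 0)` and
`b ↦ (sr 0, 1)`. There `(sr 0, 1) ^ (2n) = (1, 2n) ≡ (r (-g), 0) = (r g, 0)`, as `m ∣ 2g`. -/

variable (m n g)

abbrev ModelCover : Type := DihedralGroup m × Multiplicative (ZMod (4 * n))

def modelRel : ModelCover m n := (r g, .ofAdd (2 * n : ℕ))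

abbrev Model : Type := ModelCover m n ⧸ normalClosure {modelRel m n g}

def modelA : Model m n g := ((r 1, 1) : ModelCover m n)

def modelB : Model m n g := ((sr 0, .ofAdd 1) : ModelCover m n)

variable {m n g}

theorem two_mul_natCast_eq_zero (hg : m ∣ 2 * g) : 2 * (g : ZMod m) = 0 := by
  exact_mod_cast (ZMod.natCast_eq_zero_iff _ _).mpr hg

theorem modelRel_mem_center (hg : m ∣ 2 * g) : modelRel m n g ∈ center _ := by
  rw [mem_center_iff]
  rintro ⟨i | i, y⟩ <;> refine Prod.ext ?_ (mul_comm _ _)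
  · simp [modelRel, r_mul_r, add_comm]
  · simp [modelRel, r_mul_sr, sr_mul_r]
    linear_combination two_mul_natCast_eq_zero hg

theorem dvd_of_r_mem_zpowers_modelRel (hn : n ≠ 0) (hg : m ∣ 2 * g) {j : ℕ}
    (h : ((r j, 1) : ModelCover m n) ∈ zpowers (modelRel m n g)) : m ∣ j := by
  obtain ⟨k, hk⟩ := mem_zpowers_iff.mp h
  simp only [modelRel, Prod.pow_mk, r_zpow, ← ofAdd_zsmul, Prod.mk.injEq, r.injEq] at hk
  obtain ⟨hr, hz⟩ := hk
  obtain ⟨k', rfl⟩ : 2 ∣ k := by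
    rw [ofAdd_eq_one, zsmul_eq_mul, ← Int.cast_natCast, ← Int.cast_mul,
      ZMod.intCast_zmod_eq_zero_iff_dvd] at hz
    push_cast at hz
    obtain ⟨t, ht⟩ := hz
    exact ⟨t, by apply mul_right_cancel₀ (b := 2 * (n : ℤ)) (by omega); linarith⟩
  rw [← ZMod.natCast_eq_zero_iff, ← hr]
  push_cast
  linear_combination (k' : ZMod m) * two_mul_natCast_eq_zero hg

theorem dvd_of_modelA_pow_eq_one (hn : n ≠ 0) (hg : m ∣ 2 * g) {j : ℕ}
    (h : modelA m n g ^ j = 1) : m ∣ j := by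
  have : (zpowers (modelRel m n g)).Normal :=
    normal_of_le_center (zpowers_le.mpr (modelRel_mem_center hg))
  rw [modelA, ← QuotientGroup.mk_pow, QuotientGroup.eq_one_iff, Prod.pow_mk, r_one_pow,
    one_pow] at h
  exact dvd_of_r_mem_zpowers_modelRel hn hg (normalClosure_le_normal (by simp) h)

theorem modelA_pow_m : modelA m n g ^ m = 1 := by
  rw [modelA, ← QuotientGroup.mk_pow, Prod.pow_mk, r_one_pow_n, one_pow]
  rfl

theorem modelB_pow_two_mul (hg : m ∣ 2 * g) : modelB m n g ^ (2 * n) = modelA m n g ^ g := by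
  have hneg : -(g : ZMod m) = g := by linear_combination -two_mul_natCast_eq_zero hg
  rw [modelA, modelB, ← QuotientGroup.mk_pow, ← QuotientGroup.mk_pow, ← mul_inv_eq_one,
    ← QuotientGroup.mk_inv, ← QuotientGroup.mk_mul, QuotientGroup.eq_one_iff]
  apply subset_normalClosure
  refine Prod.ext ?_ ?_
  · simp [modelRel, pow_mul, sq, hneg]
  · simp [modelRel, ← ofAdd_nsmul]

theorem modelB_mul_modelA_mul_modelB_inv :
    modelB m n g * modelA m n g * (modelB m n g)⁻¹ = (modelA m n g)⁻¹ := by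
  simp only [modelA, modelB, ← QuotientGroup.mk_mul, ← QuotientGroup.mk_inv]
  congr 1
  simp [sr_mul_r, sr_mul_sr]

end Model

theorem orderOf_a (hn : n ≠ 0) (hg : m ∣ 2 * g) : orderOf (a : KGroup m n g) = m := by
  refine Nat.dvd_antisymm (orderOf_dvd_of_pow_eq_one a_pow_m) (dvd_of_modelA_pow_eq_one hn hg ?_)
  rw [← lift_a (modelA m n g) (modelB m n g) modelA_pow_m (modelB_pow_two_mul hg)
    modelB_mul_modelA_mul_modelB_inv, ← map_pow, pow_orderOf_eq_one, map_one]

theorem normal_of_le_zpowers_a {H : Subgroup (KGroup m n g)} (hH : H ≤ zpowers a) :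
    H.Normal := by
  refine ⟨fun x hx y => ?_⟩
  obtain ⟨i, rfl⟩ := mem_zpowers_iff.mp (hH hx)
  rw [← conj_zpow, conj_a, ← zpow_mul, mul_comm, zpow_mul]
  exact zpow_mem hx _

theorem mem_center_of_commute {x : KGroup m n g} (ha : Commute x a) (hb : Commute x b) :
    x ∈ center _ :=
  mem_center_iff.mpr fun y => (mem_centralizer_iff.mp (mem_of_a_mem_of_b_mem
    (H := centralizer {x}) (by simpa [mem_centralizer_iff] using ha.eq)
    (by simpa [mem_centralizer_iff] using hb.eq) y) x rfl).symm

theorem b_pow_mem_center {q : ℕ} (hq : Even q) : (b : KGroup m n g) ^ q ∈ center _ := by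
  refine mem_center_of_commute ?_ ((Commute.refl b).pow_left q)
  rw [Commute, SemiconjBy, ← mul_inv_eq_iff_eq_mul, conj_a]
  simp [hq.neg_one_pow]

theorem a_pow_mem_center {j : ℕ} (hj : m ∣ 2 * j) : (a : KGroup m n g) ^ j ∈ center _ := by
  refine mem_center_of_commute ((Commute.refl a).pow_left j) ?_
  rw [Commute, SemiconjBy, eq_comm, ← mul_inv_eq_iff_eq_mul, ← conj_pow, b_mul_a_mul_b_inv,
    inv_pow, inv_eq_iff_mul_eq_one, ← pow_add, ← two_mul]
  obtain ⟨t, ht⟩ := hj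
  rw [ht, pow_mul, a_pow_m, one_pow]

theorem ker_bDeg : (bDeg : KGroup m n g →* _).ker = zpowers a := by
  have hle : zpowers a ≤ (bDeg : KGroup m n g →* _).ker := zpowers_le.mpr bDeg_a
  refine le_antisymm (fun x hx => ?_) hle
  have : (zpowers (a : KGroup m n g)).Normal := normal_of_le_zpowers_a le_rfl
  have htop : zpowers a ⊔ zpowers b = (⊤ : Subgroup (KGroup m n g)) :=
    (eq_top_iff' _).mpr (mem_of_a_mem_of_b_mem (mem_sup_left (mem_zpowers a))
      (mem_sup_right (mem_zpowers b)))
  obtain ⟨u, hu, _, ⟨j, rfl⟩, rfl⟩ := mem_sup_of_normal_left.mp (htop ▸ mem_top x)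
  have hj : bDeg (b : KGroup m n g) ^ j = 1 := by
    simpa [MonoidHom.mem_ker.mp (hle hu)] using hx
  rw [bDeg_b, ← ofAdd_zsmul, ofAdd_eq_one, zsmul_one, ZMod.intCast_zmod_eq_zero_iff_dvd] at hj
  obtain ⟨t, rfl⟩ := hj
  refine mul_mem hu ?_
  show b ^ ((2 * n : ℕ) * t : ℤ) ∈ _
  rw [zpow_mul, zpow_natCast, b_pow_two_mul]
  exact zpow_mem (pow_mem (mem_zpowers a) g) t

theorem bDeg_surjective : Function.Surjective (bDeg : KGroup m n g →* _) := by
  intro y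
  obtain ⟨j, hj⟩ := ZMod.intCast_surjective y.toAdd
  exact ⟨b ^ j, by rw [map_zpow, bDeg_b, ← ofAdd_zsmul, zsmul_one, hj, ofAdd_toAdd]⟩

theorem sign_surjective : Function.Surjective (sign : KGroup m n g →* ℤˣ) := by
  intro u
  rcases Int.units_eq_one_or u with rfl | rfl
  exacts [⟨1, map_one _⟩, ⟨b, sign_b⟩]

theorem card_ker_bDeg (hn : n ≠ 0) (hg : m ∣ 2 * g) :
    Nat.card (bDeg : KGroup m n g →* _).ker = m := by
  rw [ker_bDeg, Nat.card_zpowers, orderOf_a hn hg]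

theorem card_KGroup (hn : n ≠ 0) (hg : m ∣ 2 * g) : Nat.card (KGroup m n g) = 2 * m * n := by
  rw [MonoidHom.card_eq_card_ker_mul_card_of_surjective bDeg_surjective, card_ker_bDeg hn hg,
    Nat.card_congr Multiplicative.toAdd, Nat.card_zmod]
  ring

theorem card_ker_sign (hn : n ≠ 0) (hg : m ∣ 2 * g) :
    Nat.card (sign : KGroup m n g →* _).ker = m * n := by
  have := MonoidHom.card_eq_card_ker_mul_card_of_surjective
    (sign_surjective (m := m) (n := n) (g := g))
  rw [card_KGroup hn hg, Nat.card_eq_fintype_card (α := ℤˣ), Fintype.card_units_int] at this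
  linarith

theorem a_sq_mem_of_sign_eq_neg_one {N : Subgroup (KGroup m n g)} [N.Normal] {x : KGroup m n g}
    (hx : x ∈ N) (hsx : sign x = -1) : a ^ 2 ∈ N := by
  have hconj : x * a⁻¹ * x⁻¹ = a := by
    rw [← conj_inv, conj_a, hsx]
    simp
  have h : a ^ 2 = a * x * a⁻¹ * x⁻¹ := by
    rw [sq]
    nth_rw 2 [← hconj]
    group
  exact h ▸ mul_mem (Normal.conj_mem ‹_› x hx a) (inv_mem hx)

theorem card_dvd_mul_or_dvd_card_of_normal (hn : n ≠ 0) (hg : m ∣ 2 * g)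
    (N : Subgroup (KGroup m n g)) [N.Normal] : Nat.card N ∣ m * n ∨ m ∣ Nat.card N := by
  by_cases hN : N ≤ sign.ker
  · exact .inl (card_ker_sign hn hg ▸ card_dvd_of_le hN)
  right
  obtain ⟨x, hxN, hsx⟩ := SetLike.not_le_iff_exists.mp hN
  have hsx : sign x = -1 := (Int.units_eq_one_or _).resolve_left hsx
  have hmap : N.map sign = ⊤ := by
    refine (eq_top_iff' _).mpr fun u => ?_
    rcases Int.units_eq_one_or u with rfl | rfl
    exacts [one_mem _, hsx ▸ mem_map_of_mem _ hxN]
  have hsq : zpowers (a ^ 2) ≤ N ⊓ sign.ker :=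
    zpowers_le.mpr ⟨a_sq_mem_of_sign_eq_neg_one hxN hsx, by simp⟩
  have hdvd := card_dvd_of_le hsq
  rw [Nat.card_zpowers, orderOf_pow' _ two_ne_zero, orderOf_a hn hg] at hdvd
  rw [card_eq_card_inf_ker_mul_card_map sign N, hmap, card_top,
    Nat.card_eq_fintype_card (α := ℤˣ), Fintype.card_units_int]
  have hm : m ∣ 2 * (m / m.gcd 2) := by
    conv_lhs => rw [← Nat.mul_div_cancel' (Nat.gcd_dvd_left m 2)]
    exact mul_dvd_mul_right (Nat.gcd_dvd_right m 2) _
  exact mul_comm 2 _ ▸ hm.trans (mul_dvd_mul_left 2 hdvd)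

theorem orderOf_bDeg_b : orderOf (bDeg (b : KGroup m n g)) = 2 * n := by
  rw [bDeg_b, orderOf_ofAdd_eq_addOrderOf, ZMod.addOrderOf_one]

theorem orderOf_bDeg_b_pow (hn : n ≠ 0) {e : ℕ} (he : e ∣ 2 * n) :
    orderOf (bDeg (b : KGroup m n g) ^ (2 * n / e)) = e := by
  have h := orderOf_pow_orderOf_div (x := bDeg (b : KGroup m n g)) (by rw [orderOf_bDeg_b]; omega)
    (orderOf_bDeg_b (m := m) (g := g) ▸ he)
  rwa [orderOf_bDeg_b] at h

theorem exists_normal_card_eq_m_mul (hn : n ≠ 0) (hg : m ∣ 2 * g) {e : ℕ} (he : e ∣ 2 * n) :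
    ∃ N : Subgroup (KGroup m n g), N.Normal ∧ Nat.card N = m * e := by
  let H := zpowers (bDeg (b : KGroup m n g) ^ (2 * n / e))
  refine ⟨H.comap bDeg, (normal_of_isMulCommutative H).comap bDeg, ?_⟩
  rw [card_eq_card_inf_ker_mul_card_map bDeg, inf_eq_right.mpr (MonoidHom.ker_le_comap _ _),
    map_comap_eq_self_of_surjective bDeg_surjective, card_ker_bDeg hn hg, Nat.card_zpowers,
    orderOf_bDeg_b_pow hn he]

theorem orderOf_a_pow_div (hm : m ≠ 0) (hn : n ≠ 0) (hg : m ∣ 2 * g) {d : ℕ} (hd : d ∣ m) :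
    orderOf ((a : KGroup m n g) ^ (m / d)) = d := by
  have h := orderOf_pow_orderOf_div (x := (a : KGroup m n g)) (by rwa [orderOf_a hn hg])
    (orderOf_a hn hg ▸ hd)
  rwa [orderOf_a hn hg] at h

theorem exists_normal_card_eq_mul (hm : m ≠ 0) (hn : n ≠ 0) (hg : m ∣ 2 * g)
    {d e : ℕ} (hd : d ∣ m) (he : e ∣ n) (hodd : Odd e ∨ Odd (m / d)) :
    ∃ N : Subgroup (KGroup m n g), N.Normal ∧ Nat.card N = d * e := by
  set X := zpowers ((a : KGroup m n g) ^ (m / d))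
  set c := (b : KGroup m n g) ^ (2 * n / e) * a ^ g
  have he2 : e ∣ 2 * n := he.mul_left 2
  have hXa : X ≤ zpowers a := zpowers_le.mpr (pow_mem (mem_zpowers a) _)
  have hXker : X ≤ bDeg.ker := ker_bDeg (m := m) (n := n) (g := g) ▸ hXa
  have : X.Normal := normal_of_le_zpowers_a hXa
  have hc : c ∈ center _ := mul_mem
    (b_pow_mem_center ⟨n / e, by rw [Nat.mul_div_assoc _ he]; ring⟩) (a_pow_mem_center hg)
  have : (zpowers c).Normal := normal_of_le_center (zpowers_le.mpr hc)
  have horder : orderOf (bDeg c) = e := by simpa [c] using orderOf_bDeg_b_pow (m := m) (g := g) hn he2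
  have hce : c ^ e ∈ X := by
    have hdvd : m / d ∣ g * (e + 1) := by
      rcases hodd with ⟨t, rfl⟩ | hmd
      · exact (Nat.div_dvd_of_dvd hd).trans (hg.trans ⟨t + 1, by ring⟩)
      · exact ((Nat.coprime_two_right.mpr hmd).dvd_of_dvd_mul_left
          ((Nat.div_dvd_of_dvd hd).trans hg)).mul_right _
    obtain ⟨t, ht⟩ := hdvd
    rw [Commute.mul_pow (mem_center_iff.mp (a_pow_mem_center hg) _), ← pow_mul,
      Nat.div_mul_cancel he2, b_pow_two_mul, ← pow_mul, ← pow_add,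
      show g + g * e = g * (e + 1) by ring, ht, pow_mul]
    exact pow_mem (mem_zpowers _) t
  refine ⟨X ⊔ zpowers c, inferInstance, ?_⟩
  rw [card_sup_zpowers_of_le_ker bDeg hXker (horder ▸ hce), horder, Nat.card_zpowers,
    orderOf_a_pow_div hm hn hg hd]

end KGroup

theorem stmt11_general (m n g k : ℕ) (hm : 1 ≤ m) (hn : 1 ≤ n)
    (hg : g = 0 ∨ 2 * g = m)
    (hk : k ∣ 2 * m * n) :
    (∃ H : Subgroup (PresentedGroup (Krels m n g)), H.Normal ∧ Nat.card H = k) ↔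
      m ∣ k ∨ padicValNat 2 k < padicValNat 2 (2 * m * n) := by
  have hm0 : m ≠ 0 := by omega
  have hn0 : n ≠ 0 := by omega
  have hmg : m ∣ 2 * g := by rcases hg with rfl | rfl <;> simp
  constructor
  · rintro ⟨N, hN, rfl⟩
    rcases KGroup.card_dvd_mul_or_dvd_card_of_normal hn0 hmg N with h | h
    · exact .inr (mul_assoc 2 m n ▸ padicValNat_two_lt_of_dvd (mul_ne_zero hm0 hn0) h)
    · exact .inl h
  · rintro (⟨e, rfl⟩ | hv)
    · refine KGroup.exists_normal_card_eq_m_mul hn0 hmg (Nat.dvd_of_mul_dvd_mul_left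
        (Nat.pos_of_ne_zero hm0) ?_)
      rwa [show m * (2 * n) = 2 * m * n by ring]
    · obtain ⟨d, e, hd, he, rfl, hodd⟩ := exists_dvd_dvd_of_padicValNat_two_lt hm0 hn0 hk hv
      exact KGroup.exists_normal_card_eq_mul hm0 hn0 hmg hd he hodd

theorem stmt11 (m n g k : ℕ) (hm : 1 ≤ m) (hn : 1 ≤ n)
    (hgodd : Odd m → g = 0) (hg : g = 0 ∨ 2 * g = m)
    (hna : ¬ ∀ x y : PresentedGroup (Krels m n g), x * y = y * x)
    (hkpos : 0 < k) (hk : k ∣ 2 * m * n) :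
    (∃ H : Subgroup (PresentedGroup (Krels m n g)), H.Normal ∧ Nat.card H = k) ↔
      m ∣ k ∨ padicValNat 2 k < padicValNat 2 (2 * m * n) :=
  stmt11_general m n g k hm hn hg hk
end

section
/- The metacyclic group K_{m,n} = ⟨a, b : a^m = 1, b^{2n} = a^g, bab⁻¹ = a⁻¹⟩ of order 2mn is solvable, and for every divisor h of 2mn, K_{m,n} contains a subgroup of order h. -/
/-!
Since `m ∣ 2g`, the group is `(ℤ/m ⋊ ℤ/4n) / ⟨z⟩`, where `b` acts on `a` by inversion and
`z = b^(2n) a^(-g)` is central of order 2. Solvability is inherited from the split extension.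
For `h = d e` with `d ∣ m` and `e ∣ 2n`, take `A ≤ ℤ/m` of order `d` and `C ≤ ℤ/4n` of order `2e`
with its index-2 subgroup `C'`. Either `⟨z⟩ ≤ A ⋊ C`, whose image then has order `d e`, or `⟨z⟩`
meets `A ⋊ C'` trivially, and that subgroup maps injectively onto a subgroup of order `d e`.
-/

open Multiplicative SemidirectProduct

section ZModPowHom

variable {G : Type*} [Group G] {N : ℕ}

def zmodPowHom (x : G) (hx : x ^ N = 1) : Multiplicative (ZMod N) →* G :=
  AddMonoidHom.toMultiplicativeLeft
    (ZMod.lift N ⟨zmultiplesHom (Additive G) (Additive.ofMul x), by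
      simp [← ofMul_pow, hx]⟩)

theorem zmodPowHom_natCast (x : G) (hx : x ^ N = 1) (k : ℕ) :
    zmodPowHom x hx (ofAdd (k : ZMod N)) = x ^ k := by
  rw [← Int.cast_natCast]
  change Additive.toMul (ZMod.lift N _ (k : ℤ)) = _
  rw [ZMod.lift_coe]
  simp

@[simp]
theorem zmodPowHom_ofAdd_one (x : G) (hx : x ^ N = 1) : zmodPowHom x hx (ofAdd 1) = x := by
  rw [← Nat.cast_one, zmodPowHom_natCast, pow_one]

theorem zmodPowHom_apply [NeZero N] (x : G) (hx : x ^ N = 1) (j : Multiplicative (ZMod N)) :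
    zmodPowHom x hx j = x ^ (toAdd j).val := by
  rw [← zmodPowHom_natCast, ZMod.natCast_zmod_val, ofAdd_toAdd]

theorem MonoidHom.ext_zmod {H : Type*} [Group H] {F F' : Multiplicative (ZMod N) →* H}
    (h : F (ofAdd 1) = F' (ofAdd 1)) : F = F' := by
  refine MonoidHom.ext fun x => ?_
  obtain ⟨k, hk⟩ := ZMod.intCast_surjective (toAdd x)
  rw [← ofAdd_toAdd x, ← hk, ← zsmul_one, ofAdd_zsmul, map_zpow, map_zpow, h]

end ZModPowHom

namespace MulAut

variable {M : Type*} [Monoid M]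

theorem coe_pow (σ : MulAut M) (k : ℕ) : ⇑(σ ^ k) = (⇑σ)^[k] := by
  induction k with
  | zero => rfl
  | succ k ih => rw [pow_succ, coe_mul, ih, Function.iterate_succ]

theorem inv_sq (G : Type*) [CommGroup G] : (MulEquiv.inv G : MulAut G) ^ 2 = 1 := by
  ext x
  simp [pow_two, mul_apply]

end MulAut

namespace Subgroup

variable {G : Type*} [Group G]

theorem card_map_mk_mul_card_inf (N H : Subgroup G) [N.Normal] :
    Nat.card (H.map (QuotientGroup.mk' N)) * Nat.card (N ⊓ H : Subgroup G) = Nat.card H := by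
  have key := relIndex_inf_mul_relIndex ⊥ N H
  rw [bot_inf_eq, relIndex_bot_left, relIndex_bot_left, ← QuotientGroup.ker_mk' N,
    relIndex_ker, mul_comm] at key
  rwa [QuotientGroup.ker_mk'] at key

theorem normalClosure_singleton_eq_zpowers {z : G} (hz : z ∈ center G) :
    normalClosure {z} = zpowers z := by
  have : (zpowers z).Normal := by
    refine ⟨fun x hx w => ?_⟩
    rw [mem_center_iff.mp (zpowers_le.mpr hz hx) w, mul_inv_cancel_right]
    exact hx
  exact le_antisymm (normalClosure_le_normal (Set.singleton_subset_iff.mpr (mem_zpowers z)))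
    (zpowers_le.mpr (subset_normalClosure rfl))

end Subgroup

namespace QuotientGroup

variable {G : Type*} [Group G]

theorem exists_card_eq_of_card_prime {N H₁ H₂ : Subgroup G} [N.Normal]
    (hN : (Nat.card N).Prime) (hle : H₁ ≤ H₂) (hcard : Nat.card H₂ = Nat.card N * Nat.card H₁) :
    ∃ H : Subgroup (G ⧸ N), Nat.card H = Nat.card H₁ := by
  by_cases hNH₂ : N ≤ H₂
  · refine ⟨H₂.map (mk' N), Nat.eq_of_mul_eq_mul_left hN.pos ?_⟩
    rw [← hcard, ← Subgroup.card_map_mk_mul_card_inf N H₂, inf_of_le_left hNH₂, mul_comm]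
  · refine ⟨H₁.map (mk' N), ?_⟩
    have : Finite N := Nat.finite_of_card_ne_zero hN.ne_zero
    have hinf : Nat.card (N ⊓ H₁ : Subgroup G) = 1 := by
      refine (hN.eq_one_or_self_of_dvd _ (Subgroup.card_dvd_of_le inf_le_left)).resolve_right
        fun h => hNH₂ ?_
      have := Subgroup.eq_of_le_of_card_ge inf_le_left h.ge
      exact (this ▸ inf_le_right).trans hle
    rw [← Subgroup.card_map_mk_mul_card_inf N H₁, hinf, mul_one]

end QuotientGroup

namespace SemidirectProduct

variable {N G : Type*} [Group N] [Group G] {φ : G →* MulAut N}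

def prodSubgroup (A : Subgroup N) (B : Subgroup G) (hAB : ∀ b ∈ B, ∀ a ∈ A, φ b a ∈ A) :
    Subgroup (N ⋊[φ] G) where
  carrier := {x | x.left ∈ A ∧ x.right ∈ B}
  one_mem' := ⟨A.one_mem, B.one_mem⟩
  mul_mem' := fun ⟨ha, hb⟩ ⟨ha', hb'⟩ => ⟨A.mul_mem ha (hAB _ hb _ ha'), B.mul_mem hb hb'⟩
  inv_mem' := fun ⟨ha, hb⟩ => ⟨hAB _ (B.inv_mem hb) _ (A.inv_mem ha), B.inv_mem hb⟩

theorem card_prodSubgroup (A : Subgroup N) (B : Subgroup G)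
    (hAB : ∀ b ∈ B, ∀ a ∈ A, φ b a ∈ A) :
    Nat.card (prodSubgroup A B hAB) = Nat.card A * Nat.card B := by
  rw [← Nat.card_prod]
  exact Nat.card_congr ((equivProd.subtypeEquiv fun _ => Iff.rfl).trans Equiv.subtypeProdEquivProd)

theorem prodSubgroup_mono {A : Subgroup N} {B B' : Subgroup G}
    {hAB : ∀ b ∈ B, ∀ a ∈ A, φ b a ∈ A} {hAB' : ∀ b ∈ B', ∀ a ∈ A, φ b a ∈ A} (h : B ≤ B') :
    prodSubgroup A B hAB ≤ prodSubgroup A B' hAB' :=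
  fun _ ⟨ha, hb⟩ => ⟨ha, h hb⟩

section Comm

variable {N G : Type*} [CommGroup N] [CommGroup G] {φ : G →* MulAut N}

theorem inl_mem_center {x : N} (hx : ∀ y, φ y x = x) : inl x ∈ Subgroup.center (N ⋊[φ] G) :=
  Subgroup.mem_center_iff.mpr fun w => by ext <;> simp [hx, mul_comm]

theorem inr_mem_center {y : G} (hy : φ y = 1) : inr y ∈ Subgroup.center (N ⋊[φ] G) :=
  Subgroup.mem_center_iff.mpr fun w => by ext <;> simp [hy, mul_comm]

end Comm

end SemidirectProduct

namespace Metacyclic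

open Subgroup

variable (m n g : ℕ)

def invAction : Multiplicative (ZMod (4 * n)) →* MulAut (Multiplicative (ZMod m)) :=
  zmodPowHom (MulEquiv.inv _) <| by
    rw [show 4 * n = 2 * (2 * n) by ring, pow_mul, MulAut.inv_sq, one_pow]

abbrev SplitModel := Multiplicative (ZMod m) ⋊[invAction m n] Multiplicative (ZMod (4 * n))

def splitRelator : SplitModel m n :=
  inr (ofAdd (2 * n : ZMod (4 * n))) * (inl (ofAdd (g : ZMod m)))⁻¹

abbrev Model := SplitModel m n ⧸ normalClosure {splitRelator m n g}

variable {m n g}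

theorem invAction_ofAdd_one : invAction m n (ofAdd 1) = MulEquiv.inv _ := by
  rw [invAction, zmodPowHom_ofAdd_one]

theorem invAction_two_mul : invAction m n (ofAdd (2 * n : ZMod (4 * n))) = 1 := by
  have h : (2 * n : ZMod (4 * n)) = ((2 * n : ℕ) : ZMod (4 * n)) := by push_cast; rfl
  rw [invAction, h, zmodPowHom_natCast, pow_mul, MulAut.inv_sq, one_pow]

theorem invAction_apply_mem [NeZero n] {A : Subgroup (Multiplicative (ZMod m))}
    (j : Multiplicative (ZMod (4 * n))) {x : Multiplicative (ZMod m)} (hx : x ∈ A) :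
    invAction m n j x ∈ A := by
  rw [invAction, zmodPowHom_apply, MulAut.coe_pow]
  exact Set.MapsTo.iterate (fun _ hy => A.inv_mem hy) _ hx

theorem invAction_apply_of_inv_eq [NeZero n] {x : Multiplicative (ZMod m)} (hx : x⁻¹ = x)
    (j : Multiplicative (ZMod (4 * n))) : invAction m n j x = x := by
  rw [invAction, zmodPowHom_apply, MulAut.coe_pow]
  exact Function.iterate_fixed hx _

theorem two_mul_natCast_eq_zero (hg : m ∣ 2 * g) : 2 * (g : ZMod m) = 0 := by
  exact_mod_cast (ZMod.natCast_eq_zero_iff _ _).mpr hg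

theorem ofAdd_natCast_inv (hg : m ∣ 2 * g) :
    (ofAdd (g : ZMod m))⁻¹ = ofAdd (g : ZMod m) := by
  rw [← ofAdd_neg, ofAdd.injective.eq_iff, neg_eq_iff_add_eq_zero, ← two_mul,
    two_mul_natCast_eq_zero hg]

theorem splitRelator_mem_center [NeZero n] (hg : m ∣ 2 * g) :
    splitRelator m n g ∈ center (SplitModel m n) :=
  mul_mem (inr_mem_center invAction_two_mul)
    (inv_mem (inl_mem_center (invAction_apply_of_inv_eq (ofAdd_natCast_inv hg))))

theorem orderOf_splitRelator [NeZero n] (hg : m ∣ 2 * g) : orderOf (splitRelator m n g) = 2 := by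
  refine orderOf_eq_prime ?_ fun h => ?_
  · rw [pow_two]
    ext <;> simp [splitRelator, invAction_two_mul]
    · linear_combination -two_mul_natCast_eq_zero hg
    · have h4n : (4 * n : ZMod (4 * n)) = 0 := by exact_mod_cast ZMod.natCast_self (4 * n)
      linear_combination h4n
  · have h2n := congrArg (fun x => toAdd x.right) h
    simp only [splitRelator, mul_right, inv_right, right_inr, right_inl, inv_one, mul_one,
      one_right, toAdd_ofAdd, toAdd_one] at h2n
    have hdvd : 4 * n ∣ 2 * n := (ZMod.natCast_eq_zero_iff _ _).mp (by exact_mod_cast h2n)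
    have := NeZero.pos n
    have := Nat.le_of_dvd (by omega) hdvd
    omega

theorem card_normalClosure_splitRelator [NeZero n] (hg : m ∣ 2 * g) :
    Nat.card (normalClosure {splitRelator m n g}) = 2 := by
  rw [normalClosure_singleton_eq_zpowers (splitRelator_mem_center hg), Nat.card_zpowers,
    orderOf_splitRelator hg]

theorem exists_subgroup_card_eq_mul [NeZero m] [NeZero n] (hg : m ∣ 2 * g) {d e : ℕ}
    (hd : d ∣ m) (he : e ∣ 2 * n) : ∃ H : Subgroup (Model m n g), Nat.card H = d * e := by
  set a := ofAdd (1 : ZMod m)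
  set b := ofAdd (1 : ZMod (4 * n))
  have ha : orderOf a = m := by rw [orderOf_ofAdd_eq_addOrderOf, ZMod.addOrderOf_one]
  have hb : orderOf b = 4 * n := by rw [orderOf_ofAdd_eq_addOrderOf, ZMod.addOrderOf_one]
  set c := b ^ (orderOf b / (2 * e))
  have ha' : orderOf (a ^ (orderOf a / d)) = d :=
    orderOf_pow_orderOf_div (by rw [ha]; exact NeZero.ne m) (by rw [ha]; exact hd)
  have hc : orderOf c = 2 * e :=
    orderOf_pow_orderOf_div (by rw [hb]; exact NeZero.ne _)
      (by rw [hb, show 4 * n = 2 * (2 * n) by ring]; exact mul_dvd_mul_left 2 he)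
  have hc2 : orderOf (c ^ 2) = e := by
    rw [orderOf_pow_of_dvd two_ne_zero (hc ▸ dvd_mul_right 2 e), hc,
      Nat.mul_div_cancel_left _ two_pos]
  obtain ⟨H, hH⟩ := QuotientGroup.exists_card_eq_of_card_prime
    (N := normalClosure {splitRelator m n g})
    (H₁ := prodSubgroup (zpowers (a ^ (orderOf a / d))) (zpowers (c ^ 2))
      fun j _ _ => invAction_apply_mem j)
    (H₂ := prodSubgroup (zpowers (a ^ (orderOf a / d))) (zpowers c)
      fun j _ _ => invAction_apply_mem j)
    (by rw [card_normalClosure_splitRelator hg]; exact Nat.prime_two)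
    (prodSubgroup_mono (zpowers_le.mpr (npow_mem_zpowers c 2)))
    (by simp only [card_prodSubgroup, card_normalClosure_splitRelator hg, Nat.card_zpowers, ha',
      hc, hc2]; ring)
  exact ⟨H, by rw [hH, card_prodSubgroup, Nat.card_zpowers, Nat.card_zpowers, ha', hc2]⟩

section Presentation

local notation "𝔞" => (PresentedGroup.of 0 : PresentedGroup (Krels m n g))
local notation "𝔟" => (PresentedGroup.of 1 : PresentedGroup (Krels m n g))

theorem of_zero_pow : 𝔞 ^ m = 1 := by
  have h := PresentedGroup.one_of_mem (rels := Krels m n g) (Or.inl rfl)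
  rw [map_pow] at h
  exact h

theorem of_one_pow : 𝔟 ^ (2 * n) = 𝔞 ^ g := by
  have h := PresentedGroup.one_of_mem (rels := Krels m n g) (Or.inr (Or.inl rfl))
  simp only [map_mul, map_inv, map_pow, mul_inv_eq_one] at h
  exact h

theorem of_one_conj : 𝔟 * 𝔞 * 𝔟⁻¹ = 𝔞⁻¹ := by
  have h := PresentedGroup.one_of_mem (rels := Krels m n g) (Or.inr (Or.inr rfl))
  simp only [map_mul, map_inv, mul_eq_one_iff_eq_inv] at h
  exact h

theorem of_one_pow_four_mul (hg : m ∣ 2 * g) : 𝔟 ^ (4 * n) = 1 := by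
  obtain ⟨k, hk⟩ := hg
  rw [show 4 * n = 2 * n * 2 by ring, pow_mul, of_one_pow, ← pow_mul, mul_comm, hk, pow_mul,
    of_zero_pow, one_pow]

def toModel : PresentedGroup (Krels m n g) →* Model m n g :=
  PresentedGroup.toGroup
    (f := ![QuotientGroup.mk (inl (ofAdd 1)), QuotientGroup.mk (inr (ofAdd 1))]) (by
      rintro r (rfl | rfl | rfl)
      · simp only [map_pow, FreeGroup.lift_apply_of, Matrix.cons_val_zero]
        rw [← QuotientGroup.mk_pow, ← map_pow, ← ofAdd_nsmul, nsmul_one, ZMod.natCast_self,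
          ofAdd_zero, map_one, QuotientGroup.mk_one]
      · simp only [map_mul, map_inv, map_pow, FreeGroup.lift_apply_of, Matrix.cons_val_zero,
          Matrix.cons_val_one]
        rw [← QuotientGroup.mk_pow, ← QuotientGroup.mk_pow, ← QuotientGroup.mk_inv,
          ← QuotientGroup.mk_mul, QuotientGroup.eq_one_iff]
        convert subset_normalClosure (Set.mem_singleton (splitRelator m n g)) using 1
        simp [splitRelator, ← map_pow, ← ofAdd_nsmul]
      · simp only [map_mul, map_inv, FreeGroup.lift_apply_of, Matrix.cons_val_zero,
          Matrix.cons_val_one]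
        rw [← QuotientGroup.mk_inv, ← QuotientGroup.mk_mul, ← QuotientGroup.mk_mul,
          ← QuotientGroup.mk_mul, ← map_inv, ← inl_aut, invAction_ofAdd_one, ← map_mul]
        simp)

theorem semiconj_zmodPowHom_of_zero :
    Function.Semiconj (zmodPowHom 𝔞 of_zero_pow) (MulEquiv.inv _) (MulAut.conj 𝔟) := by
  have h : (zmodPowHom 𝔞 of_zero_pow).comp (MulEquiv.inv _).toMonoidHom =
      (MulAut.conj 𝔟).toMonoidHom.comp (zmodPowHom 𝔞 of_zero_pow) := by
    refine MonoidHom.ext_zmod ?_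
    simp [of_one_conj]
  exact DFunLike.congr_fun h

def ofSplitModel [NeZero n] (hg : m ∣ 2 * g) : SplitModel m n →* PresentedGroup (Krels m n g) :=
  SemidirectProduct.lift (zmodPowHom 𝔞 of_zero_pow) (zmodPowHom 𝔟 (of_one_pow_four_mul hg))
    fun j => MonoidHom.ext fun x => by
      simp only [MonoidHom.comp_apply, MulEquiv.coe_toMonoidHom]
      rw [invAction, zmodPowHom_apply (x := MulEquiv.inv _), zmodPowHom_apply (x := 𝔟), map_pow,
        MulAut.coe_pow, MulAut.coe_pow]
      exact semiconj_zmodPowHom_of_zero.iterate_right _ x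

def ofModel [NeZero n] (hg : m ∣ 2 * g) : Model m n g →* PresentedGroup (Krels m n g) :=
  QuotientGroup.lift _ (ofSplitModel hg) <| normalClosure_le_normal <|
    Set.singleton_subset_iff.mpr <| by
      have h2n : (2 * n : ZMod (4 * n)) = ((2 * n : ℕ) : ZMod (4 * n)) := by push_cast; rfl
      rw [SetLike.mem_coe, MonoidHom.mem_ker, splitRelator, map_mul, map_inv, ofSplitModel,
        lift_inl, lift_inr, h2n, zmodPowHom_natCast, zmodPowHom_natCast, of_one_pow, mul_inv_cancel]

theorem ofModel_comp_toModel [NeZero n] (hg : m ∣ 2 * g) :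
    (ofModel hg).comp toModel = MonoidHom.id (PresentedGroup (Krels m n g)) :=
  PresentedGroup.ext fun i => by
    fin_cases i <;> simp [toModel, ofModel, ofSplitModel]

theorem toModel_comp_ofModel [NeZero n] (hg : m ∣ 2 * g) :
    toModel.comp (ofModel hg) = MonoidHom.id (Model m n g) :=
  QuotientGroup.monoidHom_ext _ <| SemidirectProduct.hom_ext
    (MonoidHom.ext_zmod (by simp [toModel, ofModel, ofSplitModel]))
    (MonoidHom.ext_zmod (by simp [toModel, ofModel, ofSplitModel]))

def modelEquiv [NeZero n] (hg : m ∣ 2 * g) : PresentedGroup (Krels m n g) ≃* Model m n g :=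
  MonoidHom.toMulEquiv toModel (ofModel hg) (ofModel_comp_toModel hg) (toModel_comp_ofModel hg)

end Presentation

instance : Group.IsSolvable (SplitModel m n) :=
  Group.isSolvable_of_ker_le_range inl rightHom range_inl_eq_ker_rightHom.ge

end Metacyclic

theorem stmt18_general (m n g : ℕ) (hm : 1 ≤ m) (hn : 1 ≤ n)
    (hg : g = 0 ∨ 2 * g = m) :
    IsSolvable (PresentedGroup (Krels m n g)) ∧
      ∀ h : ℕ, h ∣ 2 * m * n →
        ∃ H : Subgroup (PresentedGroup (Krels m n g)), Nat.card H = h := by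
  have : NeZero m := ⟨by omega⟩
  have : NeZero n := ⟨by omega⟩
  have hmg : m ∣ 2 * g := by
    rcases hg with rfl | rfl
    exacts [dvd_zero m, dvd_rfl]
  let φ := Metacyclic.modelEquiv (n := n) hmg
  refine ⟨Group.isSolvable_of_isSolvable_injective φ.injective, fun h hh => ?_⟩
  obtain ⟨d, e, hd, he, rfl⟩ :=
    Nat.dvd_mul.mp (show h ∣ m * (2 * n) by rwa [mul_left_comm, ← mul_assoc])
  obtain ⟨H, hH⟩ := Metacyclic.exists_subgroup_card_eq_mul hmg hd he
  refine ⟨H.map φ.symm.toMonoidHom, ?_⟩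
  rw [Subgroup.card_map_of_injective (f := φ.symm.toMonoidHom) φ.symm.injective, hH]

theorem stmt18 (m n g : ℕ) (hm : 1 ≤ m) (hn : 1 ≤ n)
    (hgodd : Odd m → g = 0) (hg : g = 0 ∨ 2 * g = m) :
    IsSolvable (PresentedGroup (Krels m n g)) ∧
      ∀ h : ℕ, h ∣ 2 * m * n →
        ∃ H : Subgroup (PresentedGroup (Krels m n g)), Nat.card H = h :=
  stmt18_general m n g hm hn hg
end
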